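/- arXiv:2504.00826 — 3 statements merged into one kernel-verified Lean document; each statement's English description precedes it below -/
import Mathlib

section
/- Let X = ℝ² equipped with the ℓ∞ norm ‖(a, b)‖ = max(|a|, |b|). Then for every t ∈ [0, 1/2), L_X(t) = 2t² − 4t + 2. -/
/-!
Since `t • x + (1 - t) • y = (1/2) • (x + y) + (1/2 - t) • (y - x)` and `‖y - x‖ = ‖x + y‖` for
isosceles orthogonal `x, y`, both norms in the numerator are at most `(1 - t) ‖x + y‖`; hence
`L_X(t) ≤ 2 (1 - t)² = 2t² - 4t + 2` in every normed space. In `ℓ∞²` the unit vectors `(1, 0)`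
and `(0, 1)` are isosceles orthogonal and attain this bound.
-/

/-- The geometric constant `L_X(t)` defined via isosceles orthogonality. -/
noncomputable def LX (X : Type*) [NormedAddCommGroup X] [NormedSpace ℝ X] (t : ℝ) : ℝ :=
  sSup {r : ℝ | ∃ x y : X, (x, y) ≠ (0, 0) ∧ ‖x + y‖ = ‖x - y‖ ∧
    r = (‖t • x + (1 - t) • y‖ ^ 2 + ‖(1 - t) • x + t • y‖ ^ 2) / ‖x + y‖ ^ 2}

open WithLp

section NormedSpace

variable {X : Type*} [NormedAddCommGroup X] [NormedSpace ℝ X] {t : ℝ}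

noncomputable def isoscelesRatio (t : ℝ) (x y : X) : ℝ :=
  (‖t • x + (1 - t) • y‖ ^ 2 + ‖(1 - t) • x + t • y‖ ^ 2) / ‖x + y‖ ^ 2

theorem norm_smul_add_one_sub_smul_le_of_norm_add_eq_norm_sub (ht : t ≤ 1 / 2) {x y : X}
    (hxy : ‖x + y‖ = ‖x - y‖) : ‖t • x + (1 - t) • y‖ ≤ (1 - t) * ‖x + y‖ := by
  have hsplit : t • x + (1 - t) • y = (1 / 2 : ℝ) • (x + y) + (1 / 2 - t) • (y - x) := by
    module
  calc ‖t • x + (1 - t) • y‖ ≤ ‖(1 / 2 : ℝ) • (x + y)‖ + ‖(1 / 2 - t) • (y - x)‖ :=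
        hsplit ▸ norm_add_le _ _
    _ = 1 / 2 * ‖x + y‖ + (1 / 2 - t) * ‖y - x‖ := by
        rw [norm_smul, norm_smul, Real.norm_of_nonneg (by norm_num),
          Real.norm_of_nonneg (by linarith)]
    _ = (1 - t) * ‖x + y‖ := by rw [norm_sub_rev, ← hxy]; ring

theorem isoscelesRatio_le (ht : t ≤ 1 / 2) {x y : X} (hxy : ‖x + y‖ = ‖x - y‖) :
    isoscelesRatio t x y ≤ 2 * (1 - t) ^ 2 := by
  have h₁ := norm_smul_add_one_sub_smul_le_of_norm_add_eq_norm_sub ht hxy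
  have h₂ : ‖(1 - t) • x + t • y‖ ≤ (1 - t) * ‖x + y‖ := by
    have := norm_smul_add_one_sub_smul_le_of_norm_add_eq_norm_sub ht
      (x := y) (y := x) (by rw [add_comm, norm_sub_rev, hxy])
    rwa [add_comm, add_comm y] at this
  refine div_le_of_le_mul₀ (by positivity) (by positivity) ?_
  nlinarith [norm_nonneg (t • x + (1 - t) • y), norm_nonneg ((1 - t) • x + t • y),
    norm_nonneg (x + y)]

theorem LX_le (ht : t ≤ 1 / 2) : LX X t ≤ 2 * (1 - t) ^ 2 :=
  Real.sSup_le (fun _ ⟨_, _, _, hxy, hr⟩ ↦ hr.trans_le (isoscelesRatio_le ht hxy)) (by positivity)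

theorem isoscelesRatio_le_LX (ht : t ≤ 1 / 2) {x y : X} (hne : (x, y) ≠ (0, 0))
    (hxy : ‖x + y‖ = ‖x - y‖) : isoscelesRatio t x y ≤ LX X t :=
  le_csSup ⟨_, fun _ ⟨_, _, _, hxy, hr⟩ ↦ hr.trans_le (isoscelesRatio_le ht hxy)⟩
    ⟨x, y, hne, hxy, rfl⟩

end NormedSpace

theorem PiLp.norm_toLp_top_fin_two (a b : ℝ) : ‖toLp ⊤ ![a, b]‖ = max |a| |b| := by
  simp [PiLp.norm_toLp, Pi.norm_def, Fin.univ_succ]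

theorem le_LX_linfty_fin_two {t : ℝ} (ht : t ≤ 1 / 2) :
    2 * (1 - t) ^ 2 ≤ LX (PiLp ⊤ (fun _ : Fin 2 => ℝ)) t := by
  set x := toLp ⊤ ![(1 : ℝ), 0]
  set y := toLp ⊤ ![(0 : ℝ), 1]
  have hne : (x, y) ≠ (0, 0) := fun h ↦ by
    simpa [x] using congrArg (fun p ↦ p.1 0) h
  have hxy : ‖x + y‖ = ‖x - y‖ := by
    rw [← toLp_add, ← toLp_sub]
    simp only [Matrix.cons_add_cons, Matrix.cons_sub_cons, Matrix.empty_add_empty,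
      Matrix.empty_sub_empty, PiLp.norm_toLp_top_fin_two]
    norm_num
  have hmax : max |t| |1 - t| = 1 - t := by
    rw [abs_of_nonneg (by linarith : 0 ≤ 1 - t)]
    exact max_eq_right (abs_le.2 ⟨by linarith, by linarith⟩)
  have hratio : isoscelesRatio t x y = 2 * (1 - t) ^ 2 := by
    rw [isoscelesRatio, ← toLp_smul, ← toLp_smul, ← toLp_smul, ← toLp_smul, ← toLp_add,
      ← toLp_add, ← toLp_add]
    simp only [Matrix.smul_cons, Matrix.smul_empty, Matrix.cons_add_cons, Matrix.empty_add_empty,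
      PiLp.norm_toLp_top_fin_two, smul_eq_mul, mul_one, mul_zero, add_zero, zero_add, abs_one,
      max_self, hmax, max_comm |1 - t|]
    ring
  exact hratio ▸ isoscelesRatio_le_LX ht hne hxy

theorem stmt_2 (t : ℝ) (ht : t ∈ Set.Ico (0 : ℝ) (1 / 2)) :
    LX (PiLp ⊤ (fun _ : Fin 2 => ℝ)) t = 2 * t ^ 2 - 4 * t + 2 := by
  rw [show 2 * t ^ 2 - 4 * t + 2 = 2 * (1 - t) ^ 2 by ring]
  exact (LX_le ht.2.le).antisymm (le_LX_linfty_fin_two ht.2.le)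
end

section
/- Let a < b be real numbers and let X = C([a, b], ℝ) be the Banach space of continuous real-valued functions on [a, b] with the supremum norm ‖x‖ = sup_{m ∈ [a,b]} |x(m)|. Then for every t ∈ [0, 1/2), L_X(t) = 2t² − 4t + 2. -/
open Set

section IsoscelesOrthogonal

variable {X : Type*} [NormedAddCommGroup X] [NormedSpace ℝ X]

theorem norm_smul_add_one_sub_smul_le {x y : X} (hxy : ‖x + y‖ = ‖x - y‖) {t : ℝ}
    (ht : t ≤ 1 / 2) : ‖t • x + (1 - t) • y‖ ≤ (1 - t) * ‖x + y‖ :=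
  calc ‖t • x + (1 - t) • y‖ = ‖(2⁻¹ : ℝ) • (x + y) + (t - 2⁻¹) • (x - y)‖ := by
        congr 1; module
    _ ≤ ‖(2⁻¹ : ℝ) • (x + y)‖ + ‖(t - 2⁻¹) • (x - y)‖ := norm_add_le _ _
    _ = (1 - t) * ‖x + y‖ := by
        rw [norm_smul, norm_smul, ← hxy, Real.norm_of_nonneg (by norm_num),
          Real.norm_of_nonpos (by linarith)]
        ring

theorem norm_one_sub_smul_add_smul_le {x y : X} (hxy : ‖x + y‖ = ‖x - y‖) {t : ℝ}
    (ht : t ≤ 1 / 2) : ‖(1 - t) • x + t • y‖ ≤ (1 - t) * ‖x + y‖ := by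
  rw [add_comm, add_comm x]
  exact norm_smul_add_one_sub_smul_le (by rw [add_comm, hxy, norm_sub_rev]) ht

theorem norm_sub_smul_le_norm_smul_add_one_sub_smul (x y : X) {t : ℝ} (ht : 0 ≤ t) :
    ‖y‖ - t * ‖x - y‖ ≤ ‖t • x + (1 - t) • y‖ := by
  have h := norm_sub_le (t • x + (1 - t) • y) (t • (x - y))
  rw [norm_smul, Real.norm_of_nonneg ht] at h
  have hy : t • x + (1 - t) • y - t • (x - y) = y := by module
  rw [hy] at h
  linarith

theorem LX_ratio_le {x y : X} (hxy : ‖x + y‖ = ‖x - y‖) {t : ℝ} (ht : t ≤ 1 / 2) :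
    (‖t • x + (1 - t) • y‖ ^ 2 + ‖(1 - t) • x + t • y‖ ^ 2) / ‖x + y‖ ^ 2 ≤ 2 * (1 - t) ^ 2 := by
  have h₁ := norm_smul_add_one_sub_smul_le hxy ht
  have h₂ := norm_one_sub_smul_add_smul_le hxy ht
  apply div_le_of_le_mul₀ (by positivity) (by positivity)
  nlinarith [pow_le_pow_left₀ (norm_nonneg _) h₁ 2, pow_le_pow_left₀ (norm_nonneg _) h₂ 2]

theorem LX_eq_of_norm_add_le_one {t : ℝ} (ht₀ : 0 ≤ t) (ht : t ≤ 1 / 2) {x y : X}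
    (hadd : ‖x + y‖ ≤ 1) (hsub : ‖x - y‖ ≤ 1) (hx : 1 ≤ ‖x‖) (hy : 1 ≤ ‖y‖) :
    LX X t = 2 * (1 - t) ^ 2 := by
  have htwo : 2 ≤ ‖x + y‖ + ‖x - y‖ :=
    calc (2 : ℝ) ≤ ‖(2 : ℝ) • x‖ := by rw [norm_smul]; norm_num; linarith
      _ = ‖(x + y) + (x - y)‖ := by congr 1; module
      _ ≤ ‖x + y‖ + ‖x - y‖ := norm_add_le _ _
  have hadd₁ : ‖x + y‖ = 1 := by linarith
  have hsub₁ : ‖x - y‖ = 1 := by linarith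
  have hI : ‖x + y‖ = ‖x - y‖ := hadd₁.trans hsub₁.symm
  have h₁ : ‖t • x + (1 - t) • y‖ = 1 - t := by
    have hup := norm_smul_add_one_sub_smul_le hI ht
    have hlow := norm_sub_smul_le_norm_smul_add_one_sub_smul x y ht₀
    rw [hadd₁] at hup
    rw [hsub₁] at hlow
    linarith
  have h₂ : ‖(1 - t) • x + t • y‖ = 1 - t := by
    have hup := norm_one_sub_smul_add_smul_le hI ht
    have hlow := norm_sub_smul_le_norm_smul_add_one_sub_smul y x ht₀
    rw [hadd₁] at hup
    rw [add_comm (t • y), norm_sub_rev, hsub₁] at hlow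
    linarith
  refine IsGreatest.csSup_eq ⟨⟨x, y, ?_, hI, ?_⟩, ?_⟩
  · rintro ⟨rfl, -⟩
    rw [norm_zero] at hx
    linarith
  · rw [h₁, h₂, hadd₁]; ring
  · rintro r ⟨x, y, -, hxy, rfl⟩
    exact LX_ratio_le hxy ht

end IsoscelesOrthogonal

theorem LX_continuousMap_eq (K : Type*) [TopologicalSpace K] [CompactSpace K] [T2Space K]
    [Nontrivial K] {t : ℝ} (ht₀ : 0 ≤ t) (ht : t ≤ 1 / 2) :
    LX C(K, ℝ) t = 2 * (1 - t) ^ 2 := by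
  obtain ⟨p, q, hpq⟩ := exists_pair_ne K
  obtain ⟨f, hfp, hfq, hf⟩ := exists_continuous_zero_one_of_isClosed isClosed_singleton
    isClosed_singleton (disjoint_singleton.mpr hpq)
  have hfp : f p = 0 := hfp rfl
  have hfq : f q = 1 := hfq rfl
  refine LX_eq_of_norm_add_le_one (x := f) (y := 1 - f) ht₀ ht ?_ ?_ ?_ ?_
  · refine (ContinuousMap.norm_le _ zero_le_one).mpr fun k => ?_
    simp
  · refine (ContinuousMap.norm_le _ zero_le_one).mpr fun k => ?_
    obtain ⟨h₀, h₁⟩ := hf k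
    simp only [ContinuousMap.sub_apply, ContinuousMap.one_apply, Real.norm_eq_abs, abs_le]
    constructor <;> linarith
  · simpa [hfq] using f.norm_coe_le_norm q
  · simpa [hfp] using (1 - f).norm_coe_le_norm p

theorem stmt_3 (a b : ℝ) (hab : a < b) (t : ℝ) (ht : t ∈ Set.Ico (0 : ℝ) (1 / 2)) :
    LX C(Set.Icc a b, ℝ) t = 2 * t ^ 2 - 4 * t + 2 := by
  have : Nontrivial (Icc a b) :=
    ⟨⟨⟨a, left_mem_Icc.mpr hab.le⟩, ⟨b, right_mem_Icc.mpr hab.le⟩, by simpa using hab.ne⟩⟩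
  rw [LX_continuousMap_eq (Icc a b) ht.1 ht.2.le]
  ring
end

section
/- Let X be a real Banach space of dimension at least 2. Then C_NJ(X) = sup{ 2·L_X((1 − η)/2) / (1 + η²) : η ∈ (0, 1] }. -/
/-- The von Neumann–Jordan constant. -/
noncomputable def CNJ (X : Type*) [NormedAddCommGroup X] [NormedSpace ℝ X] : ℝ :=
  sSup {r : ℝ | ∃ x y : X, (x, y) ≠ (0, 0) ∧
    r = (‖x + y‖ ^ 2 + ‖x - y‖ ^ 2) / (2 * (‖x‖ ^ 2 + ‖y‖ ^ 2))}

/-!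
For `x ⊥_I y` and `η > 0` put `a = (x + y)/2` and `b = η (x - y)/2`. Then `‖b‖ = η ‖a‖`,
`a + b = (1 - t) x + t y` and `a - b = t x + (1 - t) y` with `t = (1 - η)/2`, so the
von Neumann–Jordan ratio of `(a, b)` is `2/(1 + η²)` times the `L_X(t)` ratio of `(x, y)`.
Conversely every pair with `0 < ‖b‖ ≤ ‖a‖` arises this way from `η = ‖b‖/‖a‖`,
`x = a + b/η`, `y = a - b/η`, and the pairs `(a, 0)` have ratio `1 ≤ L_X(0)`.
-/

section

variable {X : Type*} [NormedAddCommGroup X]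

noncomputable def njRatio (x y : X) : ℝ :=
  (‖x + y‖ ^ 2 + ‖x - y‖ ^ 2) / (2 * (‖x‖ ^ 2 + ‖y‖ ^ 2))

theorem njRatio_comm (x y : X) : njRatio x y = njRatio y x := by
  rw [njRatio, njRatio, add_comm x, norm_sub_rev, add_comm (‖x‖ ^ 2)]

theorem njRatio_zero_right {x : X} (hx : x ≠ 0) : njRatio x 0 = 1 := by
  have : ‖x‖ ≠ 0 := norm_ne_zero_iff.2 hx
  simp only [njRatio, add_zero, sub_zero, norm_zero]
  field_simp
  ring

theorem njRatio_le_two (x y : X) : njRatio x y ≤ 2 := by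
  refine div_le_of_le_mul₀ (by positivity) zero_le_two ?_
  nlinarith [norm_add_le x y, norm_sub_le x y, norm_nonneg (x + y), norm_nonneg (x - y),
    norm_nonneg x, norm_nonneg y, sq_nonneg (‖x‖ - ‖y‖)]

variable [NormedSpace ℝ X]

noncomputable def lxRatio (t : ℝ) (x y : X) : ℝ :=
  (‖t • x + (1 - t) • y‖ ^ 2 + ‖(1 - t) • x + t • y‖ ^ 2) / ‖x + y‖ ^ 2

theorem norm_le_norm_add_of_norm_add_eq_norm_sub {x y : X} (h : ‖x + y‖ = ‖x - y‖) :
    ‖x‖ ≤ ‖x + y‖ := by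
  have h2x : (2 : ℝ) • x = (x + y) + (x - y) := by module
  have := norm_add_le (x + y) (x - y)
  rw [← h2x, norm_smul, Real.norm_two, ← h] at this
  linarith

theorem norm_le_norm_add_of_norm_add_eq_norm_sub' {x y : X} (h : ‖x + y‖ = ‖x - y‖) :
    ‖y‖ ≤ ‖x + y‖ := by
  rw [add_comm] at h ⊢
  exact norm_le_norm_add_of_norm_add_eq_norm_sub (by rwa [norm_sub_rev])

theorem add_ne_zero_of_norm_add_eq_norm_sub {x y : X} (hne : (x, y) ≠ (0, 0))
    (h : ‖x + y‖ = ‖x - y‖) : x + y ≠ 0 := by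
  intro hxy
  have hx := norm_le_norm_add_of_norm_add_eq_norm_sub h
  have hy := norm_le_norm_add_of_norm_add_eq_norm_sub' h
  rw [hxy, norm_zero, norm_le_zero_iff] at hx hy
  exact hne (by rw [hx, hy])

theorem lxRatio_nonneg (t : ℝ) (x y : X) : 0 ≤ lxRatio t x y := by
  unfold lxRatio
  positivity

theorem lxRatio_zero_right {x : X} (hx : x ≠ 0) (t : ℝ) :
    lxRatio t x 0 = t ^ 2 + (1 - t) ^ 2 := by
  have : ‖x‖ ≠ 0 := norm_ne_zero_iff.2 hx
  simp only [lxRatio, smul_zero, add_zero, norm_smul, Real.norm_eq_abs, mul_pow, sq_abs]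
  field_simp

theorem lxRatio_le_two {t : ℝ} (ht0 : 0 ≤ t) (ht1 : t ≤ 1) {x y : X} (h : ‖x + y‖ = ‖x - y‖) :
    lxRatio t x y ≤ 2 := by
  set s := ‖x + y‖
  have hball : ∀ {u v : X}, u ∈ Metric.closedBall 0 s → v ∈ Metric.closedBall 0 s →
      ‖t • u + (1 - t) • v‖ ≤ s := fun hu hv => mem_closedBall_zero_iff.1 <|
    convex_closedBall (0 : X) s hu hv ht0 (sub_nonneg.2 ht1) (add_sub_cancel t 1)
  have hx : x ∈ Metric.closedBall 0 s :=
    mem_closedBall_zero_iff.2 (norm_le_norm_add_of_norm_add_eq_norm_sub h)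
  have hy : y ∈ Metric.closedBall 0 s :=
    mem_closedBall_zero_iff.2 (norm_le_norm_add_of_norm_add_eq_norm_sub' h)
  have h₁ := hball hx hy
  have h₂ := hball hy hx
  rw [add_comm] at h₂
  refine div_le_of_le_mul₀ (by positivity) zero_le_two ?_
  nlinarith [norm_nonneg (t • x + (1 - t) • y), norm_nonneg ((1 - t) • x + t • y)]

theorem njRatio_half_add_smul_sub {x y : X} (h : ‖x + y‖ = ‖x - y‖) (η : ℝ) :
    njRatio ((2 : ℝ)⁻¹ • (x + y)) ((η / 2) • (x - y)) =
      2 * lxRatio ((1 - η) / 2) x y / (1 + η ^ 2) := by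
  have hadd : (2 : ℝ)⁻¹ • (x + y) + (η / 2) • (x - y) =
      (1 - (1 - η) / 2) • x + ((1 - η) / 2) • y := by module
  have hsub : (2 : ℝ)⁻¹ • (x + y) - (η / 2) • (x - y) =
      ((1 - η) / 2) • x + (1 - (1 - η) / 2) • y := by module
  have hna : ‖(2 : ℝ)⁻¹ • (x + y)‖ ^ 2 = ‖x + y‖ ^ 2 / 4 := by
    rw [norm_smul, mul_pow, norm_inv, Real.norm_two]
    ring
  have hnb : ‖(η / 2) • (x - y)‖ ^ 2 = η ^ 2 * ‖x + y‖ ^ 2 / 4 := by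
    rw [norm_smul, mul_pow, Real.norm_eq_abs, sq_abs, ← h]
    ring
  rw [njRatio, lxRatio, hadd, hsub, hna, hnb]
  rcases eq_or_ne ‖x + y‖ 0 with hs | hs
  · simp [hs]
  · field_simp
    ring

theorem exists_half_add_smul_sub {a b : X} {η : ℝ} (hη : 0 < η) (hb : ‖b‖ = η * ‖a‖) :
    ∃ x y : X, ‖x + y‖ = ‖x - y‖ ∧ (2 : ℝ)⁻¹ • (x + y) = a ∧ (η / 2) • (x - y) = b := by
  refine ⟨a + η⁻¹ • b, a - η⁻¹ • b, ?_, by module, ?_⟩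
  · have hadd : a + η⁻¹ • b + (a - η⁻¹ • b) = (2 : ℝ) • a := by module
    have hsub : a + η⁻¹ • b - (a - η⁻¹ • b) = (2 * η⁻¹) • b := by module
    rw [hadd, hsub, norm_smul, norm_smul, Real.norm_two, Real.norm_of_nonneg (by positivity), hb]
    field_simp
  · rw [show a + η⁻¹ • b - (a - η⁻¹ • b) = (2 * η⁻¹) • b by module, smul_smul]
    field_simp
    exact one_smul ℝ b

variable (X) in
theorem CNJ_nonneg : 0 ≤ CNJ X :=
  Real.sSup_nonneg <| by
    rintro _ ⟨x, y, -, rfl⟩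
    positivity

theorem le_CNJ {x y : X} (hne : (x, y) ≠ (0, 0)) : njRatio x y ≤ CNJ X :=
  le_csSup ⟨2, by rintro _ ⟨x, y, -, rfl⟩; exact njRatio_le_two x y⟩ ⟨x, y, hne, rfl⟩

theorem CNJ_le {c : ℝ} (hc : 0 ≤ c) (h : ∀ x y : X, (x, y) ≠ (0, 0) → njRatio x y ≤ c) :
    CNJ X ≤ c :=
  Real.sSup_le (by rintro _ ⟨x, y, hne, rfl⟩; exact h x y hne) hc

variable (X) in
theorem LX_nonneg (t : ℝ) : 0 ≤ LX X t :=
  Real.sSup_nonneg <| by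
    rintro _ ⟨x, y, -, -, rfl⟩
    exact lxRatio_nonneg t x y

theorem LX_le_s8 {t c : ℝ} (hc : 0 ≤ c)
    (h : ∀ x y : X, (x, y) ≠ (0, 0) → ‖x + y‖ = ‖x - y‖ → lxRatio t x y ≤ c) : LX X t ≤ c :=
  Real.sSup_le (by rintro _ ⟨x, y, hne, hxy, rfl⟩; exact h x y hne hxy) hc

variable (X) in
theorem LX_le_two {t : ℝ} (ht0 : 0 ≤ t) (ht1 : t ≤ 1) : LX X t ≤ 2 :=
  LX_le_s8 zero_le_two fun _ _ _ h => lxRatio_le_two ht0 ht1 h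

theorem le_LX {t : ℝ} (ht0 : 0 ≤ t) (ht1 : t ≤ 1) {x y : X} (hne : (x, y) ≠ (0, 0))
    (h : ‖x + y‖ = ‖x - y‖) : lxRatio t x y ≤ LX X t :=
  le_csSup ⟨2, by rintro _ ⟨x, y, -, h, rfl⟩; exact lxRatio_le_two ht0 ht1 h⟩ ⟨x, y, hne, h, rfl⟩

theorem one_le_LX_zero {x : X} (hx : x ≠ 0) : 1 ≤ LX X 0 := by
  simpa [lxRatio_zero_right hx] using
    le_LX le_rfl zero_le_one (x := x) (y := 0) (by simp [hx]) (by simp)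

theorem two_mul_LX_div_le_CNJ (η : ℝ) : 2 * LX X ((1 - η) / 2) / (1 + η ^ 2) ≤ CNJ X := by
  have hη : 0 < 1 + η ^ 2 := by positivity
  rw [div_le_iff₀ hη, ← le_div_iff₀' two_pos]
  refine LX_le_s8 (by have := CNJ_nonneg X; positivity) fun x y hne h => ?_
  have ha : (2 : ℝ)⁻¹ • (x + y) ≠ 0 :=
    smul_ne_zero (by norm_num) (add_ne_zero_of_norm_add_eq_norm_sub hne h)
  have := le_CNJ (x := (2 : ℝ)⁻¹ • (x + y)) (y := (η / 2) • (x - y))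
    fun h => ha (Prod.ext_iff.1 h).1
  rw [njRatio_half_add_smul_sub h, div_le_iff₀ hη] at this
  linarith

theorem exists_njRatio_le_two_mul_LX_div {a b : X} (hb : b ≠ 0) (hba : ‖b‖ ≤ ‖a‖) :
    ∃ η ∈ Set.Ioc (0 : ℝ) 1, njRatio a b ≤ 2 * LX X ((1 - η) / 2) / (1 + η ^ 2) := by
  have hb₀ : 0 < ‖b‖ := norm_pos_iff.2 hb
  have ha₀ : 0 < ‖a‖ := hb₀.trans_le hba
  set η := ‖b‖ / ‖a‖
  have hη : η ∈ Set.Ioc (0 : ℝ) 1 := ⟨div_pos hb₀ ha₀, (div_le_one ha₀).2 hba⟩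
  obtain ⟨x, y, h, hxy, hxy'⟩ := exists_half_add_smul_sub hη.1 (div_mul_cancel₀ _ ha₀.ne').symm
  have hne : (x, y) ≠ (0, 0) := by
    rintro ⟨⟩
    simp [← hxy] at ha₀
  refine ⟨η, hη, ?_⟩
  rw [← hxy, ← hxy', njRatio_half_add_smul_sub h]
  gcongr
  exact le_LX (by linarith [hη.2]) (by linarith [hη.1]) hne h

end

theorem stmt_8_general (X : Type*) [NormedAddCommGroup X] [NormedSpace ℝ X] :
    CNJ X = sSup {r : ℝ | ∃ η ∈ Set.Ioc (0 : ℝ) 1,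
      r = 2 * LX X ((1 - η) / 2) / (1 + η ^ 2)} := by
  set B := {r : ℝ | ∃ η ∈ Set.Ioc (0 : ℝ) 1, r = 2 * LX X ((1 - η) / 2) / (1 + η ^ 2)}
  have hB_nonneg : ∀ r ∈ B, 0 ≤ r := by
    rintro _ ⟨η, -, rfl⟩
    have := LX_nonneg X ((1 - η) / 2)
    positivity
  have hB_bdd : BddAbove B := by
    refine ⟨4, ?_⟩
    rintro _ ⟨η, ⟨hη0, hη1⟩, rfl⟩
    have hL := LX_le_two X (t := (1 - η) / 2) (by linarith) (by linarith)
    calc 2 * LX X ((1 - η) / 2) / (1 + η ^ 2) ≤ 2 * LX X ((1 - η) / 2) :=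
          div_le_self (by have := LX_nonneg X ((1 - η) / 2); positivity) (by nlinarith)
      _ ≤ 4 := by linarith
  refine le_antisymm (CNJ_le (Real.sSup_nonneg hB_nonneg) fun a b hne => ?_)
    (Real.sSup_le (by rintro _ ⟨η, -, rfl⟩; exact two_mul_LX_div_le_CNJ η) (CNJ_nonneg X))
  wlog hba : ‖b‖ ≤ ‖a‖ generalizing a b
  · rw [njRatio_comm]
    exact this b a (fun h => hne (by simp_all)) (le_of_not_ge hba)
  rcases eq_or_ne b 0 with rfl | hb
  · have ha : a ≠ 0 := fun ha => hne (by rw [ha])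
    rw [njRatio_zero_right ha]
    exact (one_le_LX_zero ha).trans (le_csSup hB_bdd ⟨1, by norm_num, by norm_num⟩)
  · obtain ⟨η, hη, hle⟩ := exists_njRatio_le_two_mul_LX_div hb hba
    exact hle.trans (le_csSup hB_bdd ⟨η, hη, rfl⟩)

theorem stmt_8 (X : Type*) [NormedAddCommGroup X] [NormedSpace ℝ X] [CompleteSpace X]
    (hdim : 2 ≤ Module.rank ℝ X) :
    CNJ X = sSup {r : ℝ | ∃ η ∈ Set.Ioc (0 : ℝ) 1,
      r = 2 * LX X ((1 - η) / 2) / (1 + η ^ 2)} :=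
  stmt_8_general X
end
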